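/- arXiv:2207.02829 — 4 statements merged into one kernel-verified Lean document; each statement's English description precedes it below -/
import Mathlib

section
/- Fix positive constants L_f, L_y, M_f, D, E_0 and a stepsize α with 0 < α ≤ 1/(2·L_f). Then there exists a constant C > 0, depending only on (L_f, L_y, M_f, D, α, E_0) and not on T, with the following property. Let X ⊆ ℝ^{d1} be nonempty, closed and convex with diameter at most D, let T ≥ 1, and for each t ∈ {1,…,T}: let φ_t : ℝ^{d1} → ℝ be convex and differentiable on ℝ^{d1} with ∇φ_t L_f-Lipschitz on ℝ^{d1}; let x*_t ∈ X satisfy the vanishing-gradient condition ∇φ_t(x*_t) = 0 (so x*_t minimizes φ_t over X); and let y*_t : ℝ^{d1} → ℝ^{d2} be L_y-Lipschitz. Suppose x_1 ∈ X, ‖y_1 − y*_1(x_1)‖ ≤ E_0, and for every t ∈ {1,…,T}: ‖y_{t+1} − y*_t(x_t)‖ ≤ ρ_t·‖y_t − y*_t(x_t)‖ with ρ_t := 1/(2t²), and x_{t+1} = Π_X(x_t − α·g̃_t) for some g̃_t ∈ ℝ^{d1} with ‖g̃_t − ∇φ_t(x_t)‖ ≤ M_f·‖y_{t+1} − y*_t(x_t)‖.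 Then Σ_{t=1}^T (φ_t(x_t) − φ_t(x*_t)) ≤ C·( 1 + P_{1,T} + Y_{1,T} + Y_{2,T} ). -/
/-!
Each round is an inexact projected gradient step on `φ_t`. Because `∇φ_t(x*_t) = 0`,
co-coercivity gives `‖∇φ_t(x_t)‖² ≤ L_f ⟪∇φ_t(x_t), x_t - x*_t⟫`, and with `α ≤ 1/(2L_f)`
the three-point argument for the projection yields
`φ_t(x_t) - φ_t(x*_t) ≤ (‖x_t - x*_t‖² - ‖x_{t+1} - x*_t‖²)/α + 2α e_t² + 2D e_t`,
where `e_t = ‖g̃_t - ∇φ_t(x_t)‖ ≤ M_f ε_t` and `ε_t = ‖y_{t+1} - y*_t(x_t)‖`.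
The distance terms telescope to at most `D² + 2D P_{1,T}`.

For the inner variable, the triangle inequality through `y*_t(x*_t)` and
`y*_{t+1}(x*_{t+1})` bounds the drift `‖y_{t+1} - y*_{t+1}(x_{t+1})‖ ≤ ε_t + 2L_y D + δ_{t+1}`,
with `δ_t` the summands of `Y_{1,T}`. As `ρ_t ≤ 1/2`, this keeps
`‖y_t - y*_t(x_t)‖ ≤ 2(E_0 + 2L_y D + Σ_{s ≤ t} δ_s)`, so
`ε_t ≤ (E_0 + 2L_y D + Σ_{s ≤ t} δ_s)/t²`. Summing against `Σ 1/t² ≤ 2`, with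
Cauchy–Schwarz for the squares, gives `Σ ε_t = O(1 + Y_{1,T})` and
`Σ ε_t² = O(1 + Y_{2,T})`.
-/

open Finset

open scoped Gradient RealInnerProductSpace

section InnerProductSpace

variable {E : Type*} [NormedAddCommGroup E] [InnerProductSpace ℝ E]

theorem norm_sub_le_of_forall_norm_sub_le {X : Set E} (hX : Convex ℝ X) {p q u : E}
    (hq : q ∈ X) (hu : u ∈ X) (hmin : ∀ z ∈ X, ‖q - p‖ ≤ ‖z - p‖) : ‖q - u‖ ≤ ‖p - u‖ := by
  have : Nonempty X := ⟨⟨q, hq⟩⟩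
  have hinf : ‖p - q‖ = ⨅ z : X, ‖p - z‖ := le_antisymm
    (le_ciInf fun z => by simpa only [norm_sub_rev p] using hmin z z.2)
    (ciInf_le ⟨0, Set.forall_mem_range.2 fun _ => norm_nonneg _⟩ (⟨q, hq⟩ : X))
  have hobtuse := (norm_eq_iInf_iff_real_inner_le_zero hX hq).1 hinf u hu
  have hsplit : ‖p - u‖ ^ 2 = ‖p - q‖ ^ 2 - 2 * ⟪p - q, u - q⟫ + ‖u - q‖ ^ 2 := by
    rw [← norm_sub_sq_real, sub_sub_sub_cancel_right]
  rw [norm_sub_rev q u]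
  nlinarith [norm_nonneg (u - q), norm_nonneg (p - u), sq_nonneg ‖p - q‖]

variable [CompleteSpace E] {f : E → ℝ} {L : ℝ}

theorem hasDerivAt_comp_add_smul (hf : Differentiable ℝ f) (a v : E) (t : ℝ) :
    HasDerivAt (fun s : ℝ => f (a + s • v)) ⟪∇ f (a + t • v), v⟫ t := by
  rw [inner_gradient_left]
  exact (hf _).hasFDerivAt.comp_hasDerivAt t
    (((hasDerivAt_id t).smul_const v).const_add a |>.congr_deriv (one_smul ℝ v))

theorem ConvexOn.add_inner_gradient_le (hf : ConvexOn ℝ Set.univ f) (hd : Differentiable ℝ f)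
    (a b : E) : f a + ⟪∇ f a, b - a⟫ ≤ f b := by
  have hline : ConvexOn ℝ Set.univ (f ∘ AffineMap.lineMap (k := ℝ) a b) := by
    simpa using hf.comp_affineMap (AffineMap.lineMap a b)
  have hcomp : f ∘ AffineMap.lineMap (k := ℝ) a b = fun s : ℝ => f (a + s • (b - a)) := by
    ext s
    simp [AffineMap.lineMap_apply, add_comm]
  rw [hcomp] at hline
  have := hline.le_slope_of_hasDerivAt (Set.mem_univ 0) (Set.mem_univ 1) one_pos
    (by simpa only [zero_smul, add_zero] using hasDerivAt_comp_add_smul hd a (b - a) 0)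
  simp only [slope_def_field, zero_smul, one_smul, add_zero, sub_zero, div_one,
    add_sub_cancel] at this
  linarith

theorem le_add_inner_gradient_add_sq (hd : Differentiable ℝ f)
    (hlip : ∀ a b, ‖∇ f a - ∇ f b‖ ≤ L * ‖a - b‖) (a b : E) :
    f b ≤ f a + ⟪∇ f a, b - a⟫ + L / 2 * ‖b - a‖ ^ 2 := by
  set v := b - a
  have hpath := hasDerivAt_comp_add_smul hd a v
  have key := image_le_of_deriv_right_le_deriv_boundary (a := 0) (b := 1)
    (f := fun s : ℝ => f (a + s • v))
    (B := fun s => f a + s * ⟪∇ f a, v⟫ + L / 2 * s ^ 2 * ‖v‖ ^ 2)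
    (fun s _ => (hpath s).continuousAt.continuousWithinAt)
    (fun s _ => (hpath s).hasDerivWithinAt) (by simp) (by fun_prop)
    (fun s _ => ((((hasDerivAt_id s).mul_const _).const_add _).add
      (((hasDerivAt_pow 2 s).const_mul (L / 2)).mul_const _)).hasDerivWithinAt)
    (fun s hs => by
      have h := real_inner_le_norm (∇ f (a + s • v) - ∇ f a) v
      have h2 := hlip (a + s • v) a
      rw [inner_sub_left] at h
      simp only [add_sub_cancel_left, norm_smul, Real.norm_eq_abs, abs_of_nonneg hs.1] at h2
      nlinarith [norm_nonneg v])
    (Set.right_mem_Icc.2 zero_le_one)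
  simpa [v] using key

theorem ConvexOn.add_inner_gradient_add_sq_le (hf : ConvexOn ℝ Set.univ f)
    (hd : Differentiable ℝ f) (hL : 0 < L) (hlip : ∀ a b, ‖∇ f a - ∇ f b‖ ≤ L * ‖a - b‖) (a b : E) :
    f a + ⟪∇ f a, b - a⟫ + ‖∇ f b - ∇ f a‖ ^ 2 / (2 * L) ≤ f b := by
  set d := ∇ f b - ∇ f a
  set w := b - L⁻¹ • d
  have hlow := hf.add_inner_gradient_le hd a w
  have hup := le_add_inner_gradient_add_sq hd hlip b w
  have hwb : w - b = -(L⁻¹ • d) := by simp [w]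
  have hwa : w - a = (b - a) - L⁻¹ • d := by simp only [w]; abel
  rw [hwb, inner_neg_right, real_inner_smul_right, norm_neg, norm_smul, Real.norm_eq_abs,
    abs_of_pos (inv_pos.2 hL)] at hup
  rw [hwa, inner_sub_right, real_inner_smul_right] at hlow
  have hd2 : ⟪∇ f b, d⟫ - ⟪∇ f a, d⟫ = ‖d‖ ^ 2 := by
    rw [← inner_sub_left, real_inner_self_eq_norm_sq]
  have hsq : ‖d‖ ^ 2 / (2 * L) = L⁻¹ * ‖d‖ ^ 2 - L / 2 * (L⁻¹ * ‖d‖) ^ 2 := by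
    field_simp; ring
  linear_combination hlow + hup - L⁻¹ * hd2 + hsq

theorem ConvexOn.sq_norm_gradient_le_of_gradient_eq_zero (hf : ConvexOn ℝ Set.univ f)
    (hd : Differentiable ℝ f) (hL : 0 < L) (hlip : ∀ a b, ‖∇ f a - ∇ f b‖ ≤ L * ‖a - b‖)
    {u : E} (hu : ∇ f u = 0) (a : E) : ‖∇ f a‖ ^ 2 ≤ L * ⟪∇ f a, a - u⟫ := by
  have hau := hf.add_inner_gradient_add_sq_le hd hL hlip a u
  have hua := hf.add_inner_gradient_add_sq_le hd hL hlip u a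
  rw [hu, zero_sub, norm_neg] at hau
  rw [hu, inner_zero_left, sub_zero] at hua
  have hflip : ⟪∇ f a, u - a⟫ = -⟪∇ f a, a - u⟫ := by rw [← inner_neg_right, neg_sub]
  rw [hflip] at hau
  have : ‖∇ f a‖ ^ 2 / L ≤ ⟪∇ f a, a - u⟫ := by
    have : ‖∇ f a‖ ^ 2 / L = 2 * (‖∇ f a‖ ^ 2 / (2 * L)) := by field_simp
    linarith
  rwa [div_le_iff₀ hL, mul_comm] at this

theorem ConvexOn.sub_le_of_inexact_projected_gradient_step (hf : ConvexOn ℝ Set.univ f)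
    (hd : Differentiable ℝ f) (hL : 0 < L) (hlip : ∀ a b, ‖∇ f a - ∇ f b‖ ≤ L * ‖a - b‖)
    {α D e : ℝ} (hα0 : 0 < α) (hα : α ≤ 1 / (2 * L)) {X : Set E} (hX : Convex ℝ X)
    {a u q g : E} (hu : u ∈ X) (hq : q ∈ X) (hgu : ∇ f u = 0) (hau : ‖a - u‖ ≤ D)
    (hg : ‖g - ∇ f a‖ ≤ e) (hmin : ∀ z ∈ X, ‖q - (a - α • g)‖ ≤ ‖z - (a - α • g)‖) :
    f a - f u ≤ (‖a - u‖ ^ 2 - ‖q - u‖ ^ 2) / α + 2 * α * e ^ 2 + 2 * D * e := by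
  set G := ∇ f a
  set S := ⟪G, a - u⟫
  have hgap : f a - f u ≤ S := by
    have := hf.add_inner_gradient_le hd a u
    have : ⟪G, u - a⟫ = -S := by rw [← inner_neg_right, neg_sub]
    linarith
  have hproj : ‖q - u‖ ^ 2 ≤ ‖a - u‖ ^ 2 - 2 * α * ⟪g, a - u⟫ + α ^ 2 * ‖g‖ ^ 2 := by
    have := pow_le_pow_left₀ (norm_nonneg _) (norm_sub_le_of_forall_norm_sub_le hX hq hu hmin) 2
    rwa [sub_right_comm, norm_sub_sq_real (a - u), real_inner_smul_right, norm_smul,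
      Real.norm_eq_abs, abs_of_pos hα0, real_inner_comm, mul_pow, ← mul_assoc] at this
  have hinner : S - D * e ≤ ⟪g, a - u⟫ := by
    have hsplit : ⟪g, a - u⟫ = S + ⟪g - G, a - u⟫ := by rw [inner_sub_left]; ring
    have := (abs_real_inner_le_norm (g - G) (a - u)).trans
      (mul_le_mul hg hau (norm_nonneg _) ((norm_nonneg _).trans hg))
    linarith [abs_le.1 this]
  have hnorm : ‖g‖ ^ 2 ≤ 2 * ‖G‖ ^ 2 + 2 * e ^ 2 := by
    have : ‖g‖ ≤ ‖G‖ + e := by linarith [norm_le_insert' g G]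
    nlinarith [norm_nonneg g, sq_nonneg (‖G‖ - e)]
  have hcoco : 2 * α * ‖G‖ ^ 2 ≤ S := by
    have h1 := hf.sq_norm_gradient_le_of_gradient_eq_zero hd hL hlip hgu a
    have h2 : 2 * α * L ≤ 1 := by rw [le_div_iff₀ (by positivity)] at hα; linarith
    nlinarith [sq_nonneg ‖G‖]
  rw [div_add' _ _ _ hα0.ne', div_add' _ _ _ hα0.ne', le_div_iff₀ hα0]
  nlinarith

end InnerProductSpace

theorem sum_Icc_inv_sq_le_two (T : ℕ) : ∑ t ∈ Icc 1 T, ((t : ℝ) ^ 2)⁻¹ ≤ 2 := by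
  have h := sum_Ioo_inv_sq_le (α := ℝ) 0 (T + 1)
  have hIoo : Ioo 0 (T + 1) = Icc 1 T := by
    ext; simp [Nat.one_le_iff_ne_zero, Nat.pos_iff_ne_zero]
  rw [hIoo] at h
  simpa using h

theorem sum_Icc_sub_eq_sub_add_sum (a b : ℕ → ℝ) {T : ℕ} (hT : 1 ≤ T) :
    ∑ t ∈ Icc 1 T, (a t - b t) = a 1 - b T + ∑ t ∈ Icc 2 T, (a t - b (t - 1)) := by
  induction T, hT using Nat.le_induction with
  | base => simp
  | succ n hn ih =>
    rw [sum_Icc_succ_top (by omega), sum_Icc_succ_top (by omega), ih, Nat.add_sub_cancel]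
    ring

theorem le_two_mul_add_sum_of_halving_drift {ε η δ : ℕ → ℝ} {B : ℝ} {T : ℕ} (hB : 0 ≤ B)
    (hδ : ∀ t, 0 ≤ δ t) (hhalf : ∀ n ∈ Icc 1 T, ε n ≤ η n / 2) (h1 : η 1 ≤ B)
    (hdrift : ∀ n ∈ Ico 1 T, η (n + 1) ≤ ε n + B + δ (n + 1)) :
    ∀ n ∈ Icc 1 T, η n ≤ 2 * (B + ∑ s ∈ Icc 2 n, δ s) := by
  intro n hn
  obtain ⟨hn1, hnT⟩ := mem_Icc.1 hn
  clear hn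
  induction n, hn1 using Nat.le_induction with
  | base => simpa using h1.trans (by linarith)
  | succ n hn ih =>
    have hsum : 0 ≤ ∑ s ∈ Icc 2 n, δ s := sum_nonneg fun s _ => hδ s
    have := ih (by omega)
    have := hhalf n (mem_Icc.2 ⟨hn, by omega⟩)
    have := hdrift n (mem_Ico.2 ⟨hn, by omega⟩)
    rw [sum_Icc_succ_top (by omega)]
    linarith [hδ (n + 1)]

theorem sum_le_of_le_div_sq {ε δ : ℕ → ℝ} {B : ℝ} {T : ℕ} (hB : 0 ≤ B) (hδ : ∀ t, 0 ≤ δ t)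
    (hε : ∀ t ∈ Icc 1 T, ε t ≤ (B + ∑ s ∈ Icc 2 t, δ s) / (t : ℝ) ^ 2) :
    ∑ t ∈ Icc 1 T, ε t ≤ 2 * (B + ∑ t ∈ Icc 2 T, δ t) := by
  have hS : 0 ≤ B + ∑ t ∈ Icc 2 T, δ t := add_nonneg hB (sum_nonneg fun t _ => hδ t)
  calc ∑ t ∈ Icc 1 T, ε t
      ≤ ∑ t ∈ Icc 1 T, (B + ∑ s ∈ Icc 2 T, δ s) * ((t : ℝ) ^ 2)⁻¹ := by
        refine sum_le_sum fun t ht => (hε t ht).trans ?_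
        rw [div_eq_mul_inv]
        gcongr
        · exact fun s _ _ => hδ s
        · exact (mem_Icc.1 ht).2
    _ ≤ (B + ∑ t ∈ Icc 2 T, δ t) * 2 := by
        rw [← mul_sum]; exact mul_le_mul_of_nonneg_left (sum_Icc_inv_sq_le_two T) hS
    _ = 2 * (B + ∑ t ∈ Icc 2 T, δ t) := mul_comm _ _

theorem sum_sq_le_of_le_div_sq {ε δ : ℕ → ℝ} {B : ℝ} {T : ℕ} (hε0 : ∀ t, 0 ≤ ε t)
    (hε : ∀ t ∈ Icc 1 T, ε t ≤ (B + ∑ s ∈ Icc 2 t, δ s) / (t : ℝ) ^ 2) :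
    ∑ t ∈ Icc 1 T, ε t ^ 2 ≤ 4 * (B ^ 2 + ∑ t ∈ Icc 2 T, δ t ^ 2) := by
  calc ∑ t ∈ Icc 1 T, ε t ^ 2
      ≤ ∑ t ∈ Icc 1 T, 2 * (B ^ 2 + ∑ s ∈ Icc 2 T, δ s ^ 2) * ((t : ℝ) ^ 2)⁻¹ := by
        refine sum_le_sum fun t ht => ?_
        obtain ⟨ht1, htT⟩ := mem_Icc.1 ht
        have ht : (1 : ℝ) ≤ t := by exact_mod_cast ht1
        set S := ∑ s ∈ Icc 2 t, δ s
        set Y := ∑ s ∈ Icc 2 T, δ s ^ 2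
        have hcs : S ^ 2 ≤ t * Y := by
          refine sq_sum_le_card_mul_sum_sq.trans
            (mul_le_mul ?_ ?_ (by positivity) (by positivity))
          · simp
          · exact sum_le_sum_of_subset_of_nonneg (Icc_subset_Icc_right htT)
              fun s _ _ => sq_nonneg _
        have hY : 0 ≤ Y := sum_nonneg fun s _ => sq_nonneg (δ s)
        have hnum : (B + S) ^ 2 ≤ 2 * (t : ℝ) ^ 2 * (B ^ 2 + Y) := by
          nlinarith [sq_nonneg (B - S),
            mul_le_mul_of_nonneg_right (le_self_pow₀ ht two_ne_zero) hY,
            mul_le_mul_of_nonneg_right (one_le_pow₀ ht : (1 : ℝ) ≤ (t : ℝ) ^ 2) (sq_nonneg B)]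
        calc ε t ^ 2 ≤ ((B + ∑ s ∈ Icc 2 t, δ s) / (t : ℝ) ^ 2) ^ 2 :=
              pow_le_pow_left₀ (hε0 t) (hε t (mem_Icc.2 ⟨ht1, htT⟩)) 2
          _ ≤ 2 * (t : ℝ) ^ 2 * (B ^ 2 + Y) / ((t : ℝ) ^ 2) ^ 2 := by rw [div_pow]; gcongr
          _ = 2 * (B ^ 2 + Y) * ((t : ℝ) ^ 2)⁻¹ := by field_simp
    _ ≤ 2 * (B ^ 2 + ∑ t ∈ Icc 2 T, δ t ^ 2) * 2 := by
        rw [← mul_sum]; exact mul_le_mul_of_nonneg_left (sum_Icc_inv_sq_le_two T) (by positivity)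
    _ = 4 * (B ^ 2 + ∑ t ∈ Icc 2 T, δ t ^ 2) := by ring

section Online

variable {E F : Type*}

theorem sq_norm_sub_sub_sq_norm_sub_le [SeminormedAddCommGroup E] {p v w : E} {D : ℝ}
    (hv : ‖p - v‖ ≤ D) (hw : ‖p - w‖ ≤ D) : ‖p - v‖ ^ 2 - ‖p - w‖ ^ 2 ≤ 2 * D * ‖w - v‖ := by
  have h := abs_le.1 (abs_norm_sub_norm_le (p - v) (p - w))
  rw [sub_sub_sub_cancel_left] at h
  nlinarith [norm_nonneg (p - v), norm_nonneg (p - w)]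

theorem sum_sq_norm_sub_sub_le [SeminormedAddCommGroup E] {X : Set E} {D : ℝ}
    (hdiam : ∀ a ∈ X, ∀ b ∈ X, ‖a - b‖ ≤ D) {x u : ℕ → E} {T : ℕ} (hT : 1 ≤ T)
    (hx : ∀ t ∈ Icc 1 T, x t ∈ X) (hu : ∀ t ∈ Icc 1 T, u t ∈ X) :
    ∑ t ∈ Icc 1 T, (‖x t - u t‖ ^ 2 - ‖x (t + 1) - u t‖ ^ 2)
      ≤ D ^ 2 + 2 * D * ∑ t ∈ Icc 2 T, ‖u (t - 1) - u t‖ := by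
  have h1 : 1 ∈ Icc 1 T := mem_Icc.2 ⟨le_rfl, hT⟩
  have hfirst : ‖x 1 - u 1‖ ^ 2 ≤ D ^ 2 :=
    pow_le_pow_left₀ (norm_nonneg _) (hdiam _ (hx 1 h1) _ (hu 1 h1)) 2
  have hrest : ∀ t ∈ Icc 2 T, ‖x t - u t‖ ^ 2 - ‖x (t - 1 + 1) - u (t - 1)‖ ^ 2
      ≤ 2 * D * ‖u (t - 1) - u t‖ := by
    intro t ht
    obtain ⟨h2t, htT⟩ := mem_Icc.1 ht
    have ht : t ∈ Icc 1 T := mem_Icc.2 ⟨by omega, htT⟩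
    rw [Nat.sub_add_cancel (by omega)]
    exact sq_norm_sub_sub_sq_norm_sub_le (hdiam _ (hx t ht) _ (hu t ht))
      (hdiam _ (hx t ht) _ (hu (t - 1) (mem_Icc.2 ⟨by omega, by omega⟩)))
  rw [sum_Icc_sub_eq_sub_add_sum (fun t => ‖x t - u t‖ ^ 2) (fun t => ‖x (t + 1) - u t‖ ^ 2) hT,
    mul_sum]
  linarith [sum_le_sum hrest, sq_nonneg ‖x (T + 1) - u T‖]

theorem sum_sub_le_of_inexact_projected_gradient [NormedAddCommGroup E] [InnerProductSpace ℝ E]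
    [CompleteSpace E] {φ : ℕ → E → ℝ} {x u g : ℕ → E} {e : ℕ → ℝ} {X : Set E} {T : ℕ}
    {L α D : ℝ} (hT : 1 ≤ T) (hX : Convex ℝ X) (hdiam : ∀ a ∈ X, ∀ b ∈ X, ‖a - b‖ ≤ D)
    (hL : 0 < L) (hα0 : 0 < α) (hα : α ≤ 1 / (2 * L))
    (hconv : ∀ t ∈ Icc 1 T, ConvexOn ℝ Set.univ (φ t))
    (hdiff : ∀ t ∈ Icc 1 T, Differentiable ℝ (φ t))
    (hlip : ∀ t ∈ Icc 1 T, ∀ a b, ‖∇ (φ t) a - ∇ (φ t) b‖ ≤ L * ‖a - b‖)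
    (hu : ∀ t ∈ Icc 1 T, u t ∈ X ∧ ∇ (φ t) (u t) = 0) (hx : ∀ t ∈ Icc 1 (T + 1), x t ∈ X)
    (hg : ∀ t ∈ Icc 1 T, ‖g t - ∇ (φ t) (x t)‖ ≤ e t)
    (hproj : ∀ t ∈ Icc 1 T, ∀ z ∈ X, ‖x (t + 1) - (x t - α • g t)‖ ≤ ‖z - (x t - α • g t)‖) :
    ∑ t ∈ Icc 1 T, (φ t (x t) - φ t (u t))
      ≤ (D ^ 2 + 2 * D * ∑ t ∈ Icc 2 T, ‖u (t - 1) - u t‖) / α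
        + 2 * α * ∑ t ∈ Icc 1 T, e t ^ 2 + 2 * D * ∑ t ∈ Icc 1 T, e t := by
  have hxT : ∀ t ∈ Icc 1 T, x t ∈ X := fun t ht => hx t (Icc_subset_Icc_right T.le_succ ht)
  have hstep : ∀ t ∈ Icc 1 T, φ t (x t) - φ t (u t)
      ≤ (‖x t - u t‖ ^ 2 - ‖x (t + 1) - u t‖ ^ 2) / α + 2 * α * e t ^ 2 + 2 * D * e t :=
    fun t ht => (hconv t ht).sub_le_of_inexact_projected_gradient_step (hdiff t ht) hL
      (hlip t ht) hα0 hα hX (hu t ht).1 (hx (t + 1) (by rw [mem_Icc] at ht ⊢; omega)) (hu t ht).2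
      (hdiam _ (hxT t ht) _ (hu t ht).1) (hg t ht) (hproj t ht)
  calc ∑ t ∈ Icc 1 T, (φ t (x t) - φ t (u t))
      ≤ (∑ t ∈ Icc 1 T, (‖x t - u t‖ ^ 2 - ‖x (t + 1) - u t‖ ^ 2)) / α
        + 2 * α * ∑ t ∈ Icc 1 T, e t ^ 2 + 2 * D * ∑ t ∈ Icc 1 T, e t := by
        rw [sum_div, mul_sum, mul_sum, ← sum_add_distrib, ← sum_add_distrib]
        exact sum_le_sum hstep
    _ ≤ _ := by
        gcongr
        exact sum_sq_norm_sub_sub_le hdiam hT hxT fun t ht => (hu t ht).1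

theorem tracking_error_le_div_sq [SeminormedAddCommGroup E] [SeminormedAddCommGroup F]
    {x u : ℕ → E} {y : ℕ → F} {ystar : ℕ → E → F} {X : Set E} {D K E0 : ℝ} {T : ℕ}
    (hD : 0 ≤ D) (hK : 0 ≤ K) (hdiam : ∀ a ∈ X, ∀ b ∈ X, ‖a - b‖ ≤ D)
    (hx : ∀ t ∈ Icc 1 T, x t ∈ X) (hu : ∀ t ∈ Icc 1 T, u t ∈ X)
    (hlip : ∀ t ∈ Icc 1 T, ∀ a b, ‖ystar t a - ystar t b‖ ≤ K * ‖a - b‖)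
    (hy1 : ‖y 1 - ystar 1 (x 1)‖ ≤ E0)
    (hcontr : ∀ t ∈ Icc 1 T, ‖y (t + 1) - ystar t (x t)‖
      ≤ (1 / (2 * (t : ℝ) ^ 2)) * ‖y t - ystar t (x t)‖) :
    ∀ t ∈ Icc 1 T, ‖y (t + 1) - ystar t (x t)‖
      ≤ (E0 + 2 * K * D + ∑ s ∈ Icc 2 t, ‖ystar (s - 1) (u (s - 1)) - ystar s (u s)‖)
        / (t : ℝ) ^ 2 := by
  have hE0 : 0 ≤ E0 := (norm_nonneg _).trans hy1
  have hB : 0 ≤ E0 + 2 * K * D := by positivity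
  have hhalf : ∀ t ∈ Icc 1 T, ‖y (t + 1) - ystar t (x t)‖ ≤ ‖y t - ystar t (x t)‖ / 2 := by
    intro t ht
    have ht1 : (1 : ℝ) ≤ t := by exact_mod_cast (mem_Icc.1 ht).1
    have hρ : 1 / (2 * (t : ℝ) ^ 2) ≤ 1 / 2 := by gcongr; nlinarith
    nlinarith [hcontr t ht, norm_nonneg (y t - ystar t (x t))]
  have hdrift : ∀ n ∈ Ico 1 T, ‖y (n + 1) - ystar (n + 1) (x (n + 1))‖
      ≤ ‖y (n + 1) - ystar n (x n)‖ + (E0 + 2 * K * D)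
        + ‖ystar (n + 1 - 1) (u (n + 1 - 1)) - ystar (n + 1) (u (n + 1))‖ := by
    intro n hn
    obtain ⟨hn1, hnT⟩ := mem_Ico.1 hn
    have hn : n ∈ Icc 1 T := mem_Icc.2 ⟨hn1, hnT.le⟩
    have hn' : n + 1 ∈ Icc 1 T := mem_Icc.2 ⟨by omega, hnT⟩
    have hnear : ∀ s ∈ Icc 1 T, ‖ystar s (x s) - ystar s (u s)‖ ≤ K * D := fun s hs =>
      (hlip s hs _ _).trans (mul_le_mul_of_nonneg_left (hdiam _ (hx s hs) _ (hu s hs)) hK)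
    have h1 := norm_sub_le_norm_sub_add_norm_sub (y (n + 1)) (ystar n (x n))
      (ystar (n + 1) (x (n + 1)))
    have h2 := norm_sub_le_norm_sub_add_norm_sub (ystar n (x n)) (ystar n (u n))
      (ystar (n + 1) (x (n + 1)))
    have h3 := norm_sub_le_norm_sub_add_norm_sub (ystar n (u n)) (ystar (n + 1) (u (n + 1)))
      (ystar (n + 1) (x (n + 1)))
    rw [norm_sub_rev (ystar (n + 1) (u (n + 1)))] at h3
    rw [Nat.add_sub_cancel]
    linarith [hnear n hn, hnear (n + 1) hn']
  have hη := le_two_mul_add_sum_of_halving_drift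
    (δ := fun s => ‖ystar (s - 1) (u (s - 1)) - ystar s (u s)‖) hB (fun _ => norm_nonneg _)
    hhalf (hy1.trans (le_add_of_nonneg_right (by positivity))) hdrift
  intro t ht
  have ht0 : (0 : ℝ) < t := by exact_mod_cast (mem_Icc.1 ht).1
  calc ‖y (t + 1) - ystar t (x t)‖ ≤ (1 / (2 * (t : ℝ) ^ 2)) * ‖y t - ystar t (x t)‖ :=
        hcontr t ht
    _ ≤ (1 / (2 * (t : ℝ) ^ 2)) * (2 * (E0 + 2 * K * D
          + ∑ s ∈ Icc 2 t, ‖ystar (s - 1) (u (s - 1)) - ystar s (u s)‖)) := by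
        gcongr; exact hη t ht
    _ = _ := by field_simp

end Online

/-- Dynamic regret bound for the online alternating (projected) gradient method with
convex smooth outer losses under the vanishing-gradient condition, with inner
contraction factors `ρ_t = 1/(2t²)`:
`BD-Regret_T = O(1 + P_{1,T} + Y_{1,T} + Y_{2,T})`. -/
theorem convex_dynamic_regret
    (Lf Ly Mf D E0 α : ℝ)
    (hLf : 0 < Lf) (hLy : 0 < Ly) (hMf : 0 < Mf) (hD : 0 < D) (hE0 : 0 < E0)
    (hα0 : 0 < α) (hα : α ≤ 1 / (2 * Lf)) :
    ∃ C > 0, ∀ (d1 d2 T : ℕ), 1 ≤ T →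
      ∀ (X : Set (EuclideanSpace ℝ (Fin d1))), X.Nonempty → IsClosed X → Convex ℝ X →
      (∀ a ∈ X, ∀ b ∈ X, ‖a - b‖ ≤ D) →
      ∀ (φ : ℕ → EuclideanSpace ℝ (Fin d1) → ℝ)
        (xstar x : ℕ → EuclideanSpace ℝ (Fin d1))
        (ystar : ℕ → EuclideanSpace ℝ (Fin d1) → EuclideanSpace ℝ (Fin d2))
        (y : ℕ → EuclideanSpace ℝ (Fin d2))
        (g : ℕ → EuclideanSpace ℝ (Fin d1)),
      -- φ_t convex and differentiable on ℝ^{d1}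
      (∀ t ∈ Finset.Icc 1 T, ConvexOn ℝ Set.univ (φ t)) →
      (∀ t ∈ Finset.Icc 1 T, Differentiable ℝ (φ t)) →
      -- Lf-Lipschitz gradient on all of ℝ^{d1}
      (∀ t ∈ Finset.Icc 1 T, ∀ a b,
        ‖gradient (φ t) a - gradient (φ t) b‖ ≤ Lf * ‖a - b‖) →
      -- x*_t ∈ X with vanishing gradient
      (∀ t ∈ Finset.Icc 1 T, xstar t ∈ X ∧ gradient (φ t) (xstar t) = 0) →
      -- y*_t is Ly-Lipschitz
      (∀ t ∈ Finset.Icc 1 T, ∀ a b, ‖ystar t a - ystar t b‖ ≤ Ly * ‖a - b‖) →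
      x 1 ∈ X →
      ‖y 1 - ystar 1 (x 1)‖ ≤ E0 →
      -- inner contraction with ρ_t = 1/(2t²)
      (∀ t ∈ Finset.Icc 1 T, ‖y (t + 1) - ystar t (x t)‖
        ≤ (1 / (2 * (t : ℝ) ^ 2)) * ‖y t - ystar t (x t)‖) →
      -- approximate hypergradient and projected update
      (∀ t ∈ Finset.Icc 1 T,
        ‖g t - gradient (φ t) (x t)‖ ≤ Mf * ‖y (t + 1) - ystar t (x t)‖ ∧
        x (t + 1) ∈ X ∧
        ∀ z ∈ X, ‖x (t + 1) - (x t - α • g t)‖ ≤ ‖z - (x t - α • g t)‖) →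
      ∑ t ∈ Finset.Icc 1 T, (φ t (x t) - φ t (xstar t))
        ≤ C * (1 + (∑ t ∈ Finset.Icc 2 T, ‖xstar (t - 1) - xstar t‖)
            + (∑ t ∈ Finset.Icc 2 T,
                ‖ystar (t - 1) (xstar (t - 1)) - ystar t (xstar t)‖)
            + ∑ t ∈ Finset.Icc 2 T,
                ‖ystar (t - 1) (xstar (t - 1)) - ystar t (xstar t)‖ ^ 2) := by
  set B := E0 + 2 * Ly * D
  have hB : 0 ≤ B := by positivity
  -- `C` dominates every coefficient of the explicit bound
  -- `(D² + 2D P)/α + 8αM_f²(B² + Y₂) + 4DM_f(B + Y₁)` obtained below.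
  refine ⟨D ^ 2 / α + 2 * D / α + 4 * D * Mf * (B + 1) + 8 * α * Mf ^ 2 * (B ^ 2 + 1),
    by positivity, ?_⟩
  intro d1 d2 T hT X _ _ hX hdiam φ xstar x ystar y g hconv hdiff hlip hxstar hylip hx1 hy1
    hcontr hupd
  have hxX : ∀ t ∈ Icc 1 (T + 1), x t ∈ X := by
    rintro (_ | _ | t) ht
    · simp at ht
    · exact hx1
    · exact (hupd (t + 1) (by rw [mem_Icc] at ht ⊢; omega)).2.1
  have hε := tracking_error_le_div_sq hD.le hLy.le hdiam
    (fun t ht => hxX t (Icc_subset_Icc_right T.le_succ ht)) (fun t ht => (hxstar t ht).1)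
    hylip hy1 hcontr
  have hregret := sum_sub_le_of_inexact_projected_gradient hT hX hdiam hLf hα0 hα hconv hdiff
    hlip hxstar hxX (fun t ht => (hupd t ht).1) (fun t ht => (hupd t ht).2.2)
  have hsum := sum_le_of_le_div_sq hB (fun _ => norm_nonneg _) hε
  have hsum_sq := sum_sq_le_of_le_div_sq (B := B) (fun _ => norm_nonneg _) hε
  simp only [mul_pow, ← mul_sum] at hregret
  have hP : 0 ≤ ∑ t ∈ Icc 2 T, ‖xstar (t - 1) - xstar t‖ := sum_nonneg fun _ _ => norm_nonneg _
  have hY1 : 0 ≤ ∑ t ∈ Icc 2 T, ‖ystar (t - 1) (xstar (t - 1)) - ystar t (xstar t)‖ :=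
    sum_nonneg fun _ _ => norm_nonneg _
  have hY2 : 0 ≤ ∑ t ∈ Icc 2 T, ‖ystar (t - 1) (xstar (t - 1)) - ystar t (xstar t)‖ ^ 2 :=
    sum_nonneg fun _ _ => sq_nonneg _
  refine hregret.trans ?_
  rw [add_div, mul_div_right_comm]
  have h1 := mul_le_mul_of_nonneg_left hsum (by positivity : 0 ≤ 2 * D * Mf)
  have h2 := mul_le_mul_of_nonneg_left hsum_sq (by positivity : 0 ≤ 2 * α * Mf ^ 2)
  have hconst : 0 ≤ 2 * D / α + 4 * D * Mf + 8 * α * Mf ^ 2 := by positivity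
  linarith [mul_nonneg hP (by positivity :
      0 ≤ D ^ 2 / α + 4 * D * Mf * (B + 1) + 8 * α * Mf ^ 2 * (B ^ 2 + 1)),
    mul_nonneg hY1 (by positivity :
      0 ≤ D ^ 2 / α + 2 * D / α + 4 * D * Mf * B + 8 * α * Mf ^ 2 * (B ^ 2 + 1)),
    mul_nonneg hY2 (by positivity :
      0 ≤ D ^ 2 / α + 2 * D / α + 4 * D * Mf * (B + 1) + 8 * α * Mf ^ 2 * B ^ 2)]
end

section
/- Fix positive constants ℓ_0, L_y, M_f, D, E_0. Then there exists a constant C > 0, depending only on (ℓ_0, L_y, M_f, D, E_0) and not on T, with the following property. Let X ⊆ ℝ^{d1} be nonempty, closed and convex with diameter at most D, let T ≥ 1, and for each t ∈ {1,…,T}: let φ_t : ℝ^{d1} → ℝ be convex and differentiable with ‖∇φ_t(x)‖ ≤ ℓ_0 for all x ∈ X, and let y*_t : ℝ^{d1} → ℝ^{d2} be L_y-Lipschitz; let x* ∈ argmin_{x ∈ X} Σ_{t=1}^T φ_t(x). Suppose x_1 ∈ X, ‖y_1 − y*_1(x_1)‖ ≤ E_0, and for every t ∈ {1,…,T}: ‖y_{t+1}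 − y*_t(x_t)‖ ≤ ρ_t·‖y_t − y*_t(x_t)‖ with ρ_t := 1/(2t²), and x_{t+1} = Π_X(x_t − α_t·g̃_t) with stepsize α_t := D/(ℓ_0·√t) and some g̃_t ∈ ℝ^{d1} with ‖g̃_t − ∇φ_t(x_t)‖ ≤ M_f·‖y_{t+1} − y*_t(x_t)‖. Then Σ_{t=1}^T φ_t(x_t) − Σ_{t=1}^T φ_t(x*) ≤ C·( 1 + √T + Ȳ_{1,T} + Ȳ_{2,T} ), where Ȳ_{p,T} := Σ_{t=2}^T ‖y*_{t-1}(x*) − y*_t(x*)‖^p for p ∈ {1, 2}. -/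
open Finset
open scoped RealInnerProductSpace

/-!
The outer iterates are inexact projected gradient steps. First-order convexity and the
nonexpansiveness of the projection give the classical online-gradient-descent estimate; an Abel
summation of `‖x_t - x*‖² ≤ D²` against the increasing weights `1 / (2 α_t)` and
`∑ t⁻¹ᐟ² ≤ 2 √T` bound the regret by `O(√T)` plus `O(∑ u_t + ∑ u_t²)`, where
`u_t = ‖y_{t+1} - y*_t(x_t)‖` controls the hypergradient error.

For the inner errors, the triangle inequality through `y*_{t-1}(x*)` and `y*_t(x*)`, with the
`L_y`-Lipschitz continuity of the targets on a set of diameter `D`, gives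
`u_t ≤ ρ_t (u_{t-1} + 2 L_y D + ‖y*_{t-1}(x*) - y*_t(x*)‖)`. Since `ρ_t ≤ 1/8` for `t ≥ 2`, this is
a recursion `u_t ≤ b_t + u_{t-1} / 2` (and likewise for `u_t²`), whose sums are at most twice
`u_1 ≤ E_0 / 2` plus twice the forcing terms; `∑ ρ_t ≤ 1/2` then leaves `Ȳ_{1,T}` and `Ȳ_{2,T}`.
-/

theorem sum_Icc_sub_mul_le {a c : ℕ → ℝ} {B : ℝ} {n : ℕ} (hn : 1 ≤ n)
    (ha : ∀ t ∈ Icc 1 n, a t ≤ B) (ha' : 0 ≤ a (n + 1)) (hc : Monotone c) (hc1 : 0 ≤ c 1) :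
    ∑ t ∈ Icc 1 n, (a t - a (t + 1)) * c t ≤ B * c n := by
  -- Abel summation, keeping the boundary term `a (m + 1) * c m` in the invariant.
  suffices h : ∀ m ∈ Icc 1 n, ∑ t ∈ Icc 1 m, (a t - a (t + 1)) * c t + a (m + 1) * c m ≤ B * c m by
    nlinarith [h n (right_mem_Icc.mpr hn), hc1.trans (hc hn)]
  intro m hm
  induction m, (mem_Icc.mp hm).1 using Nat.le_induction with
  | base => simpa [sub_mul] using mul_le_mul_of_nonneg_right (ha 1 hm) hc1
  | succ m hm1 ih =>
    have hm' : m ∈ Icc 1 n := mem_Icc.mpr ⟨hm1, by have := (mem_Icc.mp hm).2; omega⟩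
    rw [sum_Icc_succ_top (by omega)]
    nlinarith [ih hm', mul_le_mul_of_nonneg_right (ha (m + 1) hm) (sub_nonneg.mpr (hc m.le_succ))]

theorem sum_Icc_inv_sqrt_le (n : ℕ) : ∑ t ∈ Icc 1 n, (√t)⁻¹ ≤ 2 * √n := by
  induction n with
  | zero => simp
  | succ n ih =>
    rw [sum_Icc_succ_top (by omega)]
    have hpos : 0 < √(n + 1 : ℝ) := by positivity
    have hsq : √(n + 1 : ℝ) ^ 2 = n + 1 := Real.sq_sqrt (by positivity)
    have hmono : √(n : ℝ) ≤ √(n + 1 : ℝ) := Real.sqrt_le_sqrt (by linarith)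
    have hstep : (√(n + 1 : ℝ))⁻¹ ≤ 2 * √(n + 1 : ℝ) - 2 * √n := by
      rw [inv_le_iff_one_le_mul₀' hpos]
      nlinarith [Real.sq_sqrt (Nat.cast_nonneg (α := ℝ) n)]
    push_cast
    linarith

theorem sum_Icc_two_inv_two_mul_sq_le (n : ℕ) : ∑ t ∈ Icc 2 n, 1 / (2 * (t : ℝ) ^ 2) ≤ 1 / 2 := by
  have h := sum_Ioo_inv_sq_le (α := ℝ) 1 (n + 1)
  have hIoo : Ioo 1 (n + 1) = Icc 2 n := by ext; simp; omega
  rw [hIoo] at h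
  norm_num at h
  simp_rw [one_div, mul_inv, ← mul_sum]
  linarith

theorem sum_Icc_le_of_le_half_prev {u b : ℕ → ℝ} {n : ℕ} (hn : 1 ≤ n) (hu : 0 ≤ u n)
    (hrec : ∀ t ∈ Icc 2 n, u t ≤ b t + u (t - 1) / 2) :
    ∑ t ∈ Icc 1 n, u t ≤ 2 * u 1 + 2 * ∑ t ∈ Icc 2 n, b t := by
  suffices h : ∀ m ∈ Icc 1 n, ∑ t ∈ Icc 1 m, u t + u m ≤ 2 * u 1 + 2 * ∑ t ∈ Icc 2 m, b t by
    linarith [h n (right_mem_Icc.mpr hn)]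
  intro m hm
  induction m, (mem_Icc.mp hm).1 using Nat.le_induction with
  | base => simp [two_mul]
  | succ m hm1 ih =>
    have hm' : m ∈ Icc 1 n := mem_Icc.mpr ⟨hm1, by have := (mem_Icc.mp hm).2; omega⟩
    have hstep := hrec (m + 1) (mem_Icc.mpr ⟨by omega, (mem_Icc.mp hm).2⟩)
    rw [Nat.add_sub_cancel] at hstep
    rw [sum_Icc_succ_top (by omega), sum_Icc_succ_top (by omega)]
    linarith [ih hm']

theorem le_half_add_of_le_mul_add {ρ v p q r : ℝ} (hρ : ρ ≤ 1 / 8) (hp : 0 ≤ p) (hr : 0 ≤ r)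
    (hv : v ≤ ρ * (p + q + r)) : v ≤ ρ * q + r + p / 2 := by
  nlinarith

theorem sq_le_half_add_of_le_mul_add {ρ v p q r : ℝ} (hρ0 : 0 ≤ ρ) (hρ : ρ ≤ 1 / 8) (hv0 : 0 ≤ v)
    (hv : v ≤ ρ * (p + q + r)) : v ^ 2 ≤ ρ * q ^ 2 + r ^ 2 + p ^ 2 / 2 := by
  have hsq : v ^ 2 ≤ ρ ^ 2 * (p + q + r) ^ 2 := by
    rw [← mul_pow]; exact pow_le_pow_left₀ hv0 hv 2
  have hρsq : 3 * ρ ^ 2 ≤ ρ := by nlinarith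
  nlinarith [sq_nonneg (p - q), sq_nonneg (q - r), sq_nonneg (p - r), sq_nonneg p, sq_nonneg q,
    sq_nonneg r]

theorem one_div_two_mul_sq_le_one_div_eight {t : ℕ} (ht : 2 ≤ t) :
    1 / (2 * (t : ℝ) ^ 2) ≤ 1 / 8 := by
  have : (2 : ℝ) ≤ t := by exact_mod_cast ht
  gcongr; nlinarith

theorem mem_of_forall_succ_mem {α : Type*} {K : Set α} {x : ℕ → α} {n : ℕ} (h1 : x 1 ∈ K)
    (hsucc : ∀ t ∈ Icc 1 n, x (t + 1) ∈ K) : ∀ t ∈ Icc 1 n, x t ∈ K := by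
  intro t ht
  obtain ⟨h1t, htn⟩ := mem_Icc.mp ht
  rcases h1t.eq_or_lt with rfl | hlt
  · exact h1
  · obtain ⟨s, rfl⟩ : ∃ s, t = s + 1 := ⟨t - 1, by omega⟩
    exact hsucc s (mem_Icc.mpr ⟨by omega, by omega⟩)

section InnerProductSpace

variable {F : Type*} [NormedAddCommGroup F] [InnerProductSpace ℝ F]

theorem ConvexOn.add_inner_gradient_le_s11 [CompleteSpace F] {φ : F → ℝ}
    (hφ : ConvexOn ℝ Set.univ φ) {x : F} (hd : DifferentiableAt ℝ φ x) (z : F) :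
    φ x + ⟪gradient φ x, z - x⟫ ≤ φ z := by
  let ℓ : ℝ →ᵃ[ℝ] F := AffineMap.lineMap x z
  have hderiv : HasDerivAt (φ ∘ ℓ) ⟪gradient φ x, z - x⟫ 0 := by
    have hφx : HasFDerivAt φ (InnerProductSpace.toDual ℝ F (gradient φ x)) (ℓ 0) := by
      simpa [ℓ] using hd.hasGradientAt.hasFDerivAt
    simpa using hφx.comp_hasDerivAt 0 AffineMap.hasDerivAt_lineMap
  have hslope := (hφ.comp_affineMap ℓ).le_slope_of_hasDerivAt (Set.mem_univ 0)
    (Set.mem_univ 1) one_pos hderiv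
  simp only [slope_def_field, Function.comp_apply, ℓ, AffineMap.lineMap_apply_zero,
    AffineMap.lineMap_apply_one, sub_zero, div_one] at hslope
  linarith

theorem Convex.norm_sub_le_of_forall_norm_sub_le {K : Set F} (hK : Convex ℝ K) {p q z : F}
    (hq : q ∈ K) (hmin : ∀ w ∈ K, ‖q - p‖ ≤ ‖w - p‖) (hz : z ∈ K) :
    ‖q - z‖ ^ 2 + ‖p - q‖ ^ 2 ≤ ‖p - z‖ ^ 2 := by
  have : Nonempty K := ⟨⟨q, hq⟩⟩
  have hinf : ‖p - q‖ = ⨅ w : K, ‖p - w‖ := by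
    refine le_antisymm (le_ciInf fun w => ?_) (ciInf_le ⟨0, ?_⟩ (⟨q, hq⟩ : K))
    · simpa only [norm_sub_rev p] using hmin w w.2
    · rintro _ ⟨w, rfl⟩; exact norm_nonneg _
  have hobtuse := (norm_eq_iInf_iff_real_inner_le_zero hK hq).mp hinf z hz
  have hsplit : p - z = (p - q) - (z - q) := by abel
  rw [hsplit, norm_sub_sq_real (p - q), norm_sub_rev z q]
  linarith

theorem Convex.inner_le_of_projected_step {K : Set F} (hK : Convex ℝ K) {x g q z : F} {α : ℝ}
    (hα : 0 < α) (hq : q ∈ K) (hmin : ∀ w ∈ K, ‖q - (x - α • g)‖ ≤ ‖w - (x - α • g)‖)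
    (hz : z ∈ K) :
    ⟪g, x - z⟫ ≤ (‖x - z‖ ^ 2 - ‖q - z‖ ^ 2) / (2 * α) + α / 2 * ‖g‖ ^ 2 := by
  have hproj := hK.norm_sub_le_of_forall_norm_sub_le hq hmin hz
  have hexpand : ‖x - α • g - z‖ ^ 2 = ‖x - z‖ ^ 2 - 2 * α * ⟪g, x - z⟫ + α ^ 2 * ‖g‖ ^ 2 := by
    rw [sub_right_comm, norm_sub_sq_real, inner_smul_right, norm_smul, real_inner_comm,
      Real.norm_of_nonneg hα.le]
    ring
  rw [div_add' _ _ _ (by positivity), le_div_iff₀ (by positivity)]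
  nlinarith [sq_nonneg ‖x - α • g - q‖]

theorem ConvexOn.sub_le_of_projected_step [CompleteSpace F] {φ : F → ℝ}
    (hφ : ConvexOn ℝ Set.univ φ) {x : F} (hd : DifferentiableAt ℝ φ x) {K : Set F}
    (hK : Convex ℝ K) {g q z : F} {α : ℝ} (hα : 0 < α) (hq : q ∈ K)
    (hmin : ∀ w ∈ K, ‖q - (x - α • g)‖ ≤ ‖w - (x - α • g)‖) (hz : z ∈ K) :
    φ x - φ z ≤ (‖x - z‖ ^ 2 - ‖q - z‖ ^ 2) / (2 * α) + α * ‖gradient φ x‖ ^ 2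
      + α * ‖g - gradient φ x‖ ^ 2 + ‖g - gradient φ x‖ * ‖x - z‖ := by
  set e := g - gradient φ x
  have hfirst : φ x - φ z ≤ ⟪gradient φ x, x - z⟫ := by
    have := hφ.add_inner_gradient_le_s11 hd z
    rw [← neg_sub x z, inner_neg_right] at this
    linarith
  have herror : ⟪gradient φ x, x - z⟫ ≤ ⟪g, x - z⟫ + ‖e‖ * ‖x - z‖ := by
    have hg : g = gradient φ x + e := by simp [e]
    rw [hg, inner_add_left]
    linarith [neg_le_abs ⟪e, x - z⟫, abs_real_inner_le_norm e (x - z)]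
  have hnorm : ‖g‖ ^ 2 ≤ 2 * ‖gradient φ x‖ ^ 2 + 2 * ‖e‖ ^ 2 := by
    have := norm_le_insert' g (gradient φ x)
    nlinarith [sq_nonneg (‖gradient φ x‖ - ‖e‖), norm_nonneg g]
  nlinarith [hK.inner_le_of_projected_step hα hq hmin hz]

theorem ConvexOn.sub_le_of_projected_step_of_norm_le [CompleteSpace F] {φ : F → ℝ}
    (hφ : ConvexOn ℝ Set.univ φ) {x : F} (hd : DifferentiableAt ℝ φ x) {K : Set F}
    (hK : Convex ℝ K) {ℓ0 D Mf u s : ℝ} (hℓ0 : 0 < ℓ0) (hD : 0 < D) (hs : 1 ≤ s) {g q z : F}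
    (hgrad : ‖gradient φ x‖ ≤ ℓ0) (herr : ‖g - gradient φ x‖ ≤ Mf * u) (hxz : ‖x - z‖ ≤ D)
    (hq : q ∈ K) (hmin : ∀ w ∈ K, ‖q - (x - (D / (ℓ0 * √s)) • g)‖ ≤ ‖w - (x - (D / (ℓ0 * √s)) • g)‖)
    (hz : z ∈ K) :
    φ x - φ z ≤ (‖x - z‖ ^ 2 - ‖q - z‖ ^ 2) * (ℓ0 * √s / (2 * D)) + D * ℓ0 * (√s)⁻¹
      + D * Mf ^ 2 / ℓ0 * u ^ 2 + Mf * D * u := by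
  have hsqrt : 1 ≤ √s := Real.one_le_sqrt.mpr hs
  have hα : 0 < D / (ℓ0 * √s) := by positivity
  have hstep := hφ.sub_le_of_projected_step hd hK hα hq hmin hz
  have hinv : (‖x - z‖ ^ 2 - ‖q - z‖ ^ 2) / (2 * (D / (ℓ0 * √s)))
      = (‖x - z‖ ^ 2 - ‖q - z‖ ^ 2) * (ℓ0 * √s / (2 * D)) := by
    field_simp
  have hgrad_term : D / (ℓ0 * √s) * ‖gradient φ x‖ ^ 2 ≤ D * ℓ0 * (√s)⁻¹ := by
    calc D / (ℓ0 * √s) * ‖gradient φ x‖ ^ 2 ≤ D / (ℓ0 * √s) * ℓ0 ^ 2 := by gcongr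
      _ = D * ℓ0 * (√s)⁻¹ := by field_simp
  have herr_term : D / (ℓ0 * √s) * ‖g - gradient φ x‖ ^ 2 ≤ D * Mf ^ 2 / ℓ0 * u ^ 2 := by
    calc D / (ℓ0 * √s) * ‖g - gradient φ x‖ ^ 2 ≤ D / ℓ0 * (Mf * u) ^ 2 := by
          gcongr
          exact le_mul_of_one_le_right hℓ0.le hsqrt
      _ = D * Mf ^ 2 / ℓ0 * u ^ 2 := by ring
  have hcross : ‖g - gradient φ x‖ * ‖x - z‖ ≤ Mf * D * u := by
    linarith [mul_le_mul herr hxz (norm_nonneg _) ((norm_nonneg _).trans herr)]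
  linarith

theorem sum_sub_le_of_projected_steps [CompleteSpace F] {ℓ0 D Mf : ℝ} (hℓ0 : 0 < ℓ0)
    (hD : 0 < D) {K : Set F} (hK : Convex ℝ K) (hdiam : ∀ a ∈ K, ∀ b ∈ K, ‖a - b‖ ≤ D)
    {T : ℕ} (hT : 1 ≤ T) {φ : ℕ → F → ℝ} {x g : ℕ → F} {z : F} {u : ℕ → ℝ}
    (hconv : ∀ t ∈ Icc 1 T, ConvexOn ℝ Set.univ (φ t))
    (hdiff : ∀ t ∈ Icc 1 T, Differentiable ℝ (φ t))
    (hgrad : ∀ t ∈ Icc 1 T, ∀ a ∈ K, ‖gradient (φ t) a‖ ≤ ℓ0) (hz : z ∈ K) (hx1 : x 1 ∈ K)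
    (hstep : ∀ t ∈ Icc 1 T,
      ‖g t - gradient (φ t) (x t)‖ ≤ Mf * u t ∧ x (t + 1) ∈ K ∧
      ∀ w ∈ K, ‖x (t + 1) - (x t - (D / (ℓ0 * √t)) • g t)‖
        ≤ ‖w - (x t - (D / (ℓ0 * √t)) • g t)‖) :
    ∑ t ∈ Icc 1 T, (φ t (x t) - φ t z)
      ≤ 5 / 2 * D * ℓ0 * √T + D * Mf ^ 2 / ℓ0 * ∑ t ∈ Icc 1 T, u t ^ 2
        + Mf * D * ∑ t ∈ Icc 1 T, u t := by
  have hxT := mem_of_forall_succ_mem hx1 fun t ht => (hstep t ht).2.1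
  have hregret := sum_le_sum fun t ht =>
    (hconv t ht).sub_le_of_projected_step_of_norm_le (hdiff t ht _) hK hℓ0 hD
      (by exact_mod_cast (mem_Icc.mp ht).1) (hgrad t ht _ (hxT t ht)) (hstep t ht).1
      (hdiam _ (hxT t ht) _ hz) (hstep t ht).2.1 (hstep t ht).2.2 hz
  simp only [sum_add_distrib, ← mul_sum] at hregret
  have htelescope := sum_Icc_sub_mul_le (a := fun t => ‖x t - z‖ ^ 2)
    (c := fun t => ℓ0 * √t / (2 * D)) (B := D ^ 2) hT
    (fun t ht => pow_le_pow_left₀ (norm_nonneg _) (hdiam _ (hxT t ht) _ hz) 2) (sq_nonneg _)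
    (fun s t hst => by dsimp only; gcongr) (by positivity)
  have hcT : D ^ 2 * (ℓ0 * √T / (2 * D)) = D * ℓ0 * √T / 2 := by field_simp
  nlinarith [mul_le_mul_of_nonneg_left (sum_Icc_inv_sqrt_le T) (by positivity : 0 ≤ D * ℓ0)]

end InnerProductSpace

section Tracking

variable {E G : Type*} [SeminormedAddCommGroup E] [SeminormedAddCommGroup G]

theorem norm_sub_le_add_drift {f f' : E → G} {L D : ℝ} (hL : 0 ≤ L)
    (hf : ∀ a b, ‖f a - f b‖ ≤ L * ‖a - b‖) (hf' : ∀ a b, ‖f' a - f' b‖ ≤ L * ‖a - b‖)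
    (y : G) {a a' z : E} (ha : ‖a - z‖ ≤ D) (ha' : ‖z - a'‖ ≤ D) :
    ‖y - f' a'‖ ≤ ‖y - f a‖ + 2 * L * D + ‖f z - f' z‖ := by
  have h1 := norm_sub_le_norm_sub_add_norm_sub y (f a) (f' a')
  have h2 := norm_sub_le_norm_sub_add_norm_sub (f a) (f z) (f' a')
  have h3 := norm_sub_le_norm_sub_add_norm_sub (f z) (f' z) (f' a')
  nlinarith [hf a z, hf' z a']

variable {L D : ℝ} {n : ℕ} {x : ℕ → E} {z : E} {ystar : ℕ → E → G} {y : ℕ → G}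

/-- Written with `y (t - 1 + 1)` rather than `y t`, so that the right side is literally `u (t - 1)`
for `u s = ‖y (s + 1) - ystar s (x s)‖`. -/
theorem tracking_error_le_contraction (hL : 0 ≤ L) (hx : ∀ t ∈ Icc 1 n, ‖x t - z‖ ≤ D)
    (hlip : ∀ t ∈ Icc 1 n, ∀ a b, ‖ystar t a - ystar t b‖ ≤ L * ‖a - b‖)
    (hcontr : ∀ t ∈ Icc 1 n,
      ‖y (t + 1) - ystar t (x t)‖ ≤ 1 / (2 * (t : ℝ) ^ 2) * ‖y t - ystar t (x t)‖)
    {t : ℕ} (ht : t ∈ Icc 2 n) :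
    ‖y (t + 1) - ystar t (x t)‖ ≤ 1 / (2 * (t : ℝ) ^ 2)
      * (‖y (t - 1 + 1) - ystar (t - 1) (x (t - 1))‖ + 2 * L * D
        + ‖ystar (t - 1) z - ystar t z‖) := by
  obtain ⟨h2t, htn⟩ := mem_Icc.mp ht
  have hprev : t - 1 ∈ Icc 1 n := mem_Icc.mpr ⟨by omega, by omega⟩
  have hcur : t ∈ Icc 1 n := mem_Icc.mpr ⟨by omega, htn⟩
  have hdrift := norm_sub_le_add_drift hL (hlip _ hprev) (hlip t hcur) (y t) (hx _ hprev)
    (by rw [norm_sub_rev]; exact hx t hcur)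
  rw [Nat.sub_add_cancel (by omega : 1 ≤ t)]
  refine (hcontr t hcur).trans (mul_le_mul_of_nonneg_left ?_ (by positivity))
  linarith

variable {E0 : ℝ}

theorem sum_tracking_error_le (hL : 0 ≤ L) (hn : 1 ≤ n) (hx : ∀ t ∈ Icc 1 n, ‖x t - z‖ ≤ D)
    (hlip : ∀ t ∈ Icc 1 n, ∀ a b, ‖ystar t a - ystar t b‖ ≤ L * ‖a - b‖)
    (hy1 : ‖y 1 - ystar 1 (x 1)‖ ≤ E0)
    (hcontr : ∀ t ∈ Icc 1 n,
      ‖y (t + 1) - ystar t (x t)‖ ≤ 1 / (2 * (t : ℝ) ^ 2) * ‖y t - ystar t (x t)‖) :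
    ∑ t ∈ Icc 1 n, ‖y (t + 1) - ystar t (x t)‖
      ≤ E0 + 2 * L * D + 2 * ∑ t ∈ Icc 2 n, ‖ystar (t - 1) z - ystar t z‖ := by
  have hu1 : ‖y 2 - ystar 1 (x 1)‖ ≤ E0 / 2 := by
    have := hcontr 1 (mem_Icc.mpr ⟨le_rfl, hn⟩)
    norm_num at this
    linarith
  have hsum := sum_Icc_le_of_le_half_prev (u := fun t => ‖y (t + 1) - ystar t (x t)‖) hn
      (norm_nonneg _) fun t ht =>
    le_half_add_of_le_mul_add (one_div_two_mul_sq_le_one_div_eight (mem_Icc.mp ht).1)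
      (norm_nonneg _) (norm_nonneg _) (tracking_error_le_contraction hL hx hlip hcontr ht)
  rw [sum_add_distrib, ← sum_mul] at hsum
  have hD : 0 ≤ D := (norm_nonneg _).trans (hx 1 (mem_Icc.mpr ⟨le_rfl, hn⟩))
  nlinarith [sum_Icc_two_inv_two_mul_sq_le n, mul_nonneg hL hD]

theorem sum_sq_tracking_error_le (hL : 0 ≤ L) (hn : 1 ≤ n) (hx : ∀ t ∈ Icc 1 n, ‖x t - z‖ ≤ D)
    (hlip : ∀ t ∈ Icc 1 n, ∀ a b, ‖ystar t a - ystar t b‖ ≤ L * ‖a - b‖)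
    (hy1 : ‖y 1 - ystar 1 (x 1)‖ ≤ E0)
    (hcontr : ∀ t ∈ Icc 1 n,
      ‖y (t + 1) - ystar t (x t)‖ ≤ 1 / (2 * (t : ℝ) ^ 2) * ‖y t - ystar t (x t)‖) :
    ∑ t ∈ Icc 1 n, ‖y (t + 1) - ystar t (x t)‖ ^ 2
      ≤ E0 ^ 2 / 2 + 4 * L ^ 2 * D ^ 2 + 2 * ∑ t ∈ Icc 2 n, ‖ystar (t - 1) z - ystar t z‖ ^ 2 := by
  have hu1 : ‖y 2 - ystar 1 (x 1)‖ ^ 2 ≤ E0 ^ 2 / 4 := by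
    have := hcontr 1 (mem_Icc.mpr ⟨le_rfl, hn⟩)
    norm_num at this
    nlinarith [norm_nonneg (y 2 - ystar 1 (x 1))]
  have hsum := sum_Icc_le_of_le_half_prev (u := fun t => ‖y (t + 1) - ystar t (x t)‖ ^ 2) hn
      (sq_nonneg _) fun t ht =>
    sq_le_half_add_of_le_mul_add (by positivity)
      (one_div_two_mul_sq_le_one_div_eight (mem_Icc.mp ht).1) (norm_nonneg _) (tracking_error_le_contraction hL hx hlip hcontr ht)
  rw [sum_add_distrib, ← sum_mul] at hsum
  nlinarith [sum_Icc_two_inv_two_mul_sq_le n]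

end Tracking

theorem add_mul_add_mul_add_mul_le_mul {P Q R S a b c : ℝ} (hP : 0 ≤ P) (hQ : 0 ≤ Q) (hR : 0 ≤ R)
    (hS : 0 ≤ S) (ha : 0 ≤ a) (hb : 0 ≤ b) (hc : 0 ≤ c) :
    P + Q * a + R * b + S * c ≤ (P + Q + R + S) * (1 + a + b + c) := by
  nlinarith [mul_nonneg hP (add_nonneg (add_nonneg ha hb) hc), mul_nonneg hQ (add_nonneg hb hc),
    mul_nonneg hR (add_nonneg ha hc), mul_nonneg hS (add_nonneg ha hb)]

/-- Static regret bound for the online alternating (projected) gradient method with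
convex outer losses, stepsizes `α_t = D/(ℓ0·√t)` and inner contraction factors
`ρ_t = 1/(2t²)`: `BS-Regret_T = O(1 + √T + Ȳ_{1,T} + Ȳ_{2,T})`. -/
theorem convex_static_regret
    (ℓ0 Ly Mf D E0 : ℝ)
    (hℓ0 : 0 < ℓ0) (hLy : 0 < Ly) (hMf : 0 < Mf) (hD : 0 < D) (hE0 : 0 < E0) :
    ∃ C > 0, ∀ (d1 d2 T : ℕ), 1 ≤ T →
      ∀ (X : Set (EuclideanSpace ℝ (Fin d1))), X.Nonempty → IsClosed X → Convex ℝ X →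
      (∀ a ∈ X, ∀ b ∈ X, ‖a - b‖ ≤ D) →
      ∀ (φ : ℕ → EuclideanSpace ℝ (Fin d1) → ℝ)
        (xstar : EuclideanSpace ℝ (Fin d1))
        (x : ℕ → EuclideanSpace ℝ (Fin d1))
        (ystar : ℕ → EuclideanSpace ℝ (Fin d1) → EuclideanSpace ℝ (Fin d2))
        (y : ℕ → EuclideanSpace ℝ (Fin d2))
        (g : ℕ → EuclideanSpace ℝ (Fin d1)),
      -- φ_t convex and differentiable
      (∀ t ∈ Finset.Icc 1 T, ConvexOn ℝ Set.univ (φ t)) →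
      (∀ t ∈ Finset.Icc 1 T, Differentiable ℝ (φ t)) →
      -- bounded gradient on X
      (∀ t ∈ Finset.Icc 1 T, ∀ a ∈ X, ‖gradient (φ t) a‖ ≤ ℓ0) →
      -- y*_t is Ly-Lipschitz
      (∀ t ∈ Finset.Icc 1 T, ∀ a b, ‖ystar t a - ystar t b‖ ≤ Ly * ‖a - b‖) →
      -- x* minimizes the cumulative loss over X
      (xstar ∈ X ∧ ∀ z ∈ X,
        ∑ t ∈ Finset.Icc 1 T, φ t xstar ≤ ∑ t ∈ Finset.Icc 1 T, φ t z) →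
      x 1 ∈ X →
      ‖y 1 - ystar 1 (x 1)‖ ≤ E0 →
      -- inner contraction with ρ_t = 1/(2t²)
      (∀ t ∈ Finset.Icc 1 T, ‖y (t + 1) - ystar t (x t)‖
        ≤ (1 / (2 * (t : ℝ) ^ 2)) * ‖y t - ystar t (x t)‖) →
      -- approximate hypergradient and projected update with stepsize α_t = D/(ℓ0·√t)
      (∀ t ∈ Finset.Icc 1 T,
        ‖g t - gradient (φ t) (x t)‖ ≤ Mf * ‖y (t + 1) - ystar t (x t)‖ ∧
        x (t + 1) ∈ X ∧
        ∀ z ∈ X, ‖x (t + 1) - (x t - (D / (ℓ0 * Real.sqrt t)) • g t)‖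
          ≤ ‖z - (x t - (D / (ℓ0 * Real.sqrt t)) • g t)‖) →
      (∑ t ∈ Finset.Icc 1 T, φ t (x t)) - ∑ t ∈ Finset.Icc 1 T, φ t xstar
        ≤ C * (1 + Real.sqrt T
            + (∑ t ∈ Finset.Icc 2 T, ‖ystar (t - 1) xstar - ystar t xstar‖)
            + ∑ t ∈ Finset.Icc 2 T, ‖ystar (t - 1) xstar - ystar t xstar‖ ^ 2) := by
  set A := D * Mf ^ 2 / ℓ0
  refine ⟨(A * (E0 ^ 2 / 2 + 4 * Ly ^ 2 * D ^ 2) + Mf * D * (E0 + 2 * Ly * D))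
    + 5 / 2 * D * ℓ0 + 2 * Mf * D + 2 * A, by positivity, ?_⟩
  intro d1 d2 T hT X _ _ hXconv hXdiam φ xstar x ystar y g hφconv hφdiff hφgrad hlip hxstar hx1
    hy1 hcontr hstep
  have hx := mem_of_forall_succ_mem hx1 fun t ht => (hstep t ht).2.1
  have hxD : ∀ t ∈ Icc 1 T, ‖x t - xstar‖ ≤ D := fun t ht => hXdiam _ (hx t ht) _ hxstar.1
  have hregret := sum_sub_le_of_projected_steps (u := fun t => ‖y (t + 1) - ystar t (x t)‖)
    hℓ0 hD hXconv hXdiam hT hφconv hφdiff hφgrad hxstar.1 hx1 hstep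
  have hsum := sum_tracking_error_le hLy.le hT hxD hlip hy1 hcontr
  have hsum_sq := sum_sq_tracking_error_le hLy.le hT hxD hlip hy1 hcontr
  rw [sum_sub_distrib] at hregret
  refine le_trans ?_ (add_mul_add_mul_add_mul_le_mul (by positivity) (by positivity)
    (by positivity) (by positivity) (Real.sqrt_nonneg _) (sum_nonneg fun _ _ => norm_nonneg _)
    (sum_nonneg fun _ _ => sq_nonneg _))
  nlinarith [mul_le_mul_of_nonneg_left hsum (by positivity : 0 ≤ Mf * D),
    mul_le_mul_of_nonneg_left hsum_sq (by positivity : 0 ≤ A)]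
end

section
/- Let α, ρ, M_f, L_y > 0, set c := 3·(1 + 2·L_y²·M_f²·α²), and assume c·ρ² < 1. Let T ≥ 1, and for each t ∈ {1,…,T} let y*_t : ℝ^{d1} → ℝ^{d2} be L_y-Lipschitz and let v_t ∈ ℝ^{d1}. Suppose the sequences x_1,…,x_{T+1} ∈ ℝ^{d1} and y_1,…,y_{T+1} ∈ ℝ^{d2} satisfy, for every t ∈ {1,…,T}: ‖y_{t+1} − y*_t(x_t)‖ ≤ ρ·‖y_t − y*_t(x_t)‖, and x_{t+1} = x_t − α·g̃_t for some g̃_t ∈ ℝ^{d1} with ‖g̃_t − v_t‖ ≤ M_f·‖y_{t+1} − y*_t(x_t)‖. Assume H_T := Σ_{t=2}^T sup_{x ∈ ℝ^{d1}} ‖y*_{t-1}(x) − y*_t(x)‖² is finite. Then Σ_{t=1}^T ‖y_{t+1} − y*_t(x_t)‖² ≤ (1 + c·ρ²/(1 − c·ρ²))·ρ²·‖y_1 − y*_1(x_1)‖² + (6·L_y²·α²·ρ²/(1 − c·ρ²))·Σ_{t=1}^T ‖v_t‖² + (3·ρ²/(1 − c·ρ²))·H_T. -/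
open Finset

/-!
Write `e_t = ‖y_{t+1} - y*_t(x_t)‖`. Moving from round `t` to round `t + 1` changes the target
`y*_t(x_t)` by at most `L_y α ‖g̃_t‖` (the outer step, through the Lipschitz bound) plus the drift
`sup_x ‖y*_t(x) - y*_{t+1}(x)‖` of the minimizer maps, and `‖g̃_t‖ ≤ ‖v_t‖ + M_f e_t`. After the
contraction and `(a + b + c)² ≤ 3 (a² + b² + c²)` this gives the linear recursion
`e_{t+1}² ≤ c ρ² e_t² + 6 L_y² α² ρ² ‖v_t‖² + 3 ρ² sup_x ‖y*_t(x) - y*_{t+1}(x)‖²`.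
Summed over `t`, the right-hand side contains `c ρ² Σ e_t²` again, which `c ρ² < 1` lets us absorb
into the left-hand side.
-/

theorem add_add_sq_le {R : Type*} [CommRing R] [LinearOrder R] [IsStrictOrderedRing R]
    (a b c : R) : (a + b + c) ^ 2 ≤ 3 * (a ^ 2 + b ^ 2 + c ^ 2) := by
  linarith [sq_nonneg (a - b), sq_nonneg (b - c), sq_nonneg (a - c)]

theorem sum_Ico_one_add_one {M : Type*} [AddCommMonoid M] (f : ℕ → M) (T : ℕ) :
    ∑ t ∈ Ico 1 T, f (t + 1) = ∑ t ∈ Icc 2 T, f t := by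
  rw [← Ico_add_one_right_eq_Icc]
  exact sum_Ico_add' f 1 T 1

theorem sum_Icc_le_div_of_succ_le {s r : ℕ → ℝ} {q : ℝ} {T : ℕ} (hT : 1 ≤ T)
    (hs : ∀ t, 0 ≤ s t) (hq : 0 ≤ q) (hq1 : q < 1)
    (h : ∀ t ∈ Ico 1 T, s (t + 1) ≤ q * s t + r t) :
    ∑ t ∈ Icc 1 T, s t ≤ (s 1 + ∑ t ∈ Ico 1 T, r t) / (1 - q) := by
  have hsplit : ∑ t ∈ Icc 1 T, s t = s 1 + ∑ t ∈ Ico 1 T, s (t + 1) := by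
    rw [sum_Ico_one_add_one, ← Ico_add_one_right_eq_Icc 1 T, sum_eq_sum_Ico_succ_bot (by omega),
      Ico_add_one_right_eq_Icc]
  have hshift : ∑ t ∈ Ico 1 T, s t ≤ ∑ t ∈ Icc 1 T, s t :=
    sum_le_sum_of_subset_of_nonneg Ico_subset_Icc_self fun t _ _ => hs t
  have hrec : ∑ t ∈ Ico 1 T, s (t + 1) ≤ q * ∑ t ∈ Ico 1 T, s t + ∑ t ∈ Ico 1 T, r t := by
    rw [mul_sum, ← sum_add_distrib]
    exact sum_le_sum h
  rw [le_div_iff₀ (sub_pos.mpr hq1)]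
  linarith [mul_le_mul_of_nonneg_left hshift hq]

section InnerError

variable {E F : Type*}

theorem norm_sub_apply_le_of_lipschitz [SeminormedAddCommGroup E] [SeminormedAddCommGroup F]
    {f f' : E → F} {L : ℝ} (hf : ∀ a b, ‖f a - f b‖ ≤ L * ‖a - b‖) (y : F) (x x' : E) :
    ‖y - f' x'‖ ≤ ‖y - f x‖ + L * ‖x - x'‖ + ‖f x' - f' x'‖ :=
  calc ‖y - f' x'‖ = ‖(y - f x) + (f x - f x') + (f x' - f' x')‖ := by abel_nf
    _ ≤ ‖y - f x‖ + ‖f x - f x'‖ + ‖f x' - f' x'‖ := norm_add₃_le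
    _ ≤ ‖y - f x‖ + L * ‖x - x'‖ + ‖f x' - f' x'‖ := by gcongr; exact hf x x'

theorem inner_error_sq_le [SeminormedAddCommGroup E] [NormedSpace ℝ E]
    [SeminormedAddCommGroup F] {f f' : E → F} {Ly Mf α ρ : ℝ}
    (hf : ∀ a b, ‖f a - f b‖ ≤ Ly * ‖a - b‖) {x x' g v : E} {y y' : F}
    (hx : x' = x - α • g) (hg : ‖g - v‖ ≤ Mf * ‖y - f x‖)
    (hy : ‖y' - f' x'‖ ≤ ρ * ‖y - f' x'‖) :
    ‖y' - f' x'‖ ^ 2 ≤ 3 * (1 + 2 * Ly ^ 2 * Mf ^ 2 * α ^ 2) * ρ ^ 2 * ‖y - f x‖ ^ 2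
      + 6 * Ly ^ 2 * α ^ 2 * ρ ^ 2 * ‖v‖ ^ 2 + 3 * ρ ^ 2 * ‖f x' - f' x'‖ ^ 2 := by
  set e := ‖y - f x‖
  set w := ‖f x' - f' x'‖
  have hgv : ‖g‖ ≤ ‖v‖ + Mf * e := (norm_le_norm_add_norm_sub' g v).trans (by linarith)
  have hxx : ‖x - x'‖ = |α| * ‖g‖ := by rw [hx, sub_sub_cancel, norm_smul, Real.norm_eq_abs]
  have hb : ‖y - f' x'‖ ≤ e + Ly * |α| * ‖g‖ + w := by
    simpa only [hxx, mul_assoc] using norm_sub_apply_le_of_lipschitz (f' := f') hf y x x'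
  have hg2 : ‖g‖ ^ 2 ≤ 2 * (‖v‖ ^ 2 + (Mf * e) ^ 2) :=
    (pow_le_pow_left₀ (norm_nonneg g) hgv 2).trans add_sq_le
  have hb2 : ‖y - f' x'‖ ^ 2 ≤ 3 * (e ^ 2 + (Ly * |α| * ‖g‖) ^ 2 + w ^ 2) :=
    (pow_le_pow_left₀ (norm_nonneg _) hb 2).trans (add_add_sq_le _ _ _)
  have hy2 : ‖y' - f' x'‖ ^ 2 ≤ ρ ^ 2 * ‖y - f' x'‖ ^ 2 := by
    simpa [mul_pow] using pow_le_pow_left₀ (norm_nonneg _) hy 2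
  have hρb := mul_le_mul_of_nonneg_left hb2 (sq_nonneg ρ)
  have hρg := mul_le_mul_of_nonneg_left hg2 (by positivity : 0 ≤ 3 * ρ ^ 2 * Ly ^ 2 * α ^ 2)
  simp only [mul_pow, sq_abs] at hρb hρg ⊢
  linarith

end InnerError

theorem nonconvex_inner_error_bound_general
    (d1 d2 : ℕ) (α ρ Mf Ly c : ℝ)
    (hcdef : c = 3 * (1 + 2 * Ly ^ 2 * Mf ^ 2 * α ^ 2))
    (hcρ : c * ρ ^ 2 < 1)
    (T : ℕ) (hT : 1 ≤ T)
    (ystar : ℕ → EuclideanSpace ℝ (Fin d1) → EuclideanSpace ℝ (Fin d2))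
    (hylip : ∀ t ∈ Finset.Icc 1 T, ∀ a b, ‖ystar t a - ystar t b‖ ≤ Ly * ‖a - b‖)
    (v : ℕ → EuclideanSpace ℝ (Fin d1))
    (x : ℕ → EuclideanSpace ℝ (Fin d1))
    (y : ℕ → EuclideanSpace ℝ (Fin d2))
    (g : ℕ → EuclideanSpace ℝ (Fin d1))
    (hcontract : ∀ t ∈ Finset.Icc 1 T,
      ‖y (t + 1) - ystar t (x t)‖ ≤ ρ * ‖y t - ystar t (x t)‖)
    (hupdate : ∀ t ∈ Finset.Icc 1 T,
      x (t + 1) = x t - α • g t ∧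
      ‖g t - v t‖ ≤ Mf * ‖y (t + 1) - ystar t (x t)‖)
    -- finiteness of H_T: each supremum is attained as a finite real supremum
    (hbdd : ∀ t ∈ Finset.Icc 2 T,
      BddAbove (Set.range fun a => ‖ystar (t - 1) a - ystar t a‖ ^ 2)) :
    ∑ t ∈ Finset.Icc 1 T, ‖y (t + 1) - ystar t (x t)‖ ^ 2
      ≤ (1 + c * ρ ^ 2 / (1 - c * ρ ^ 2)) * ρ ^ 2 * ‖y 1 - ystar 1 (x 1)‖ ^ 2
        + (6 * Ly ^ 2 * α ^ 2 * ρ ^ 2 / (1 - c * ρ ^ 2))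
            * ∑ t ∈ Finset.Icc 1 T, ‖v t‖ ^ 2
        + (3 * ρ ^ 2 / (1 - c * ρ ^ 2))
            * ∑ t ∈ Finset.Icc 2 T, ⨆ a, ‖ystar (t - 1) a - ystar t a‖ ^ 2 := by
  set e : ℕ → ℝ := fun t => ‖y (t + 1) - ystar t (x t)‖
  set W : ℕ → ℝ := fun t => ⨆ a, ‖ystar t a - ystar (t + 1) a‖ ^ 2
  have hstep : ∀ t ∈ Ico 1 T, e (t + 1) ^ 2
      ≤ c * ρ ^ 2 * e t ^ 2 + (6 * Ly ^ 2 * α ^ 2 * ρ ^ 2 * ‖v t‖ ^ 2 + 3 * ρ ^ 2 * W t) := by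
    intro t htT
    have ht : t ∈ Icc 1 T := Ico_subset_Icc_self htT
    have ht' : t + 1 ∈ Icc 2 T := by simp only [mem_Ico, mem_Icc] at htT ⊢; omega
    have hW : ‖ystar t (x (t + 1)) - ystar (t + 1) (x (t + 1))‖ ^ 2 ≤ W t :=
      le_ciSup (hbdd (t + 1) ht') _
    have := inner_error_sq_le (hylip t ht) (hupdate t ht).1 (hupdate t ht).2
      (hcontract (t + 1) (Icc_subset_Icc_left one_le_two ht'))
    rw [hcdef]
    linarith [mul_le_mul_of_nonneg_left hW (by positivity : (0 : ℝ) ≤ 3 * ρ ^ 2)]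
  have he1 : e 1 ^ 2 ≤ ρ ^ 2 * ‖y 1 - ystar 1 (x 1)‖ ^ 2 := by
    simpa [mul_pow] using pow_le_pow_left₀ (norm_nonneg _) (hcontract 1 (by simp [hT])) 2
  have hH : ∑ t ∈ Ico 1 T, W t = ∑ t ∈ Icc 2 T, ⨆ a, ‖ystar (t - 1) a - ystar t a‖ ^ 2 :=
    sum_Ico_one_add_one (fun t => ⨆ a, ‖ystar (t - 1) a - ystar t a‖ ^ 2) T
  calc ∑ t ∈ Icc 1 T, e t ^ 2
      ≤ (e 1 ^ 2 + ∑ t ∈ Ico 1 T, (6 * Ly ^ 2 * α ^ 2 * ρ ^ 2 * ‖v t‖ ^ 2 + 3 * ρ ^ 2 * W t))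
          / (1 - c * ρ ^ 2) :=
        sum_Icc_le_div_of_succ_le hT (fun t => sq_nonneg (e t)) (by rw [hcdef]; positivity) hcρ hstep
    _ ≤ (ρ ^ 2 * ‖y 1 - ystar 1 (x 1)‖ ^ 2
          + (6 * Ly ^ 2 * α ^ 2 * ρ ^ 2 * ∑ t ∈ Icc 1 T, ‖v t‖ ^ 2
          + 3 * ρ ^ 2 * ∑ t ∈ Icc 2 T, ⨆ a, ‖ystar (t - 1) a - ystar t a‖ ^ 2))
          / (1 - c * ρ ^ 2) := by
        rw [sum_add_distrib, ← mul_sum, ← mul_sum, hH]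
        gcongr
        exact Ico_subset_Icc_self
    _ = _ := by rw [one_add_div (sub_pos.mpr hcρ).ne']; ring

/-- Inner-estimation-error lemma for the nonconvex online alternating gradient method:
the sum of squared inner errors is bounded in terms of `Σ‖v_t‖²` and the
inner-minimizer-map variation `H_T = Σ_t sup_x ‖y*_{t-1}(x) − y*_t(x)‖²`. -/
theorem nonconvex_inner_error_bound
    (d1 d2 : ℕ) (α ρ Mf Ly c : ℝ)
    (hα : 0 < α) (hρ : 0 < ρ) (hMf : 0 < Mf) (hLy : 0 < Ly)
    (hcdef : c = 3 * (1 + 2 * Ly ^ 2 * Mf ^ 2 * α ^ 2))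
    (hcρ : c * ρ ^ 2 < 1)
    (T : ℕ) (hT : 1 ≤ T)
    (ystar : ℕ → EuclideanSpace ℝ (Fin d1) → EuclideanSpace ℝ (Fin d2))
    (hylip : ∀ t ∈ Finset.Icc 1 T, ∀ a b, ‖ystar t a - ystar t b‖ ≤ Ly * ‖a - b‖)
    (v : ℕ → EuclideanSpace ℝ (Fin d1))
    (x : ℕ → EuclideanSpace ℝ (Fin d1))
    (y : ℕ → EuclideanSpace ℝ (Fin d2))
    (g : ℕ → EuclideanSpace ℝ (Fin d1))
    (hcontract : ∀ t ∈ Finset.Icc 1 T,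
      ‖y (t + 1) - ystar t (x t)‖ ≤ ρ * ‖y t - ystar t (x t)‖)
    (hupdate : ∀ t ∈ Finset.Icc 1 T,
      x (t + 1) = x t - α • g t ∧
      ‖g t - v t‖ ≤ Mf * ‖y (t + 1) - ystar t (x t)‖)
    -- finiteness of H_T: each supremum is attained as a finite real supremum
    (hbdd : ∀ t ∈ Finset.Icc 2 T,
      BddAbove (Set.range fun a => ‖ystar (t - 1) a - ystar t a‖ ^ 2)) :
    ∑ t ∈ Finset.Icc 1 T, ‖y (t + 1) - ystar t (x t)‖ ^ 2
      ≤ (1 + c * ρ ^ 2 / (1 - c * ρ ^ 2)) * ρ ^ 2 * ‖y 1 - ystar 1 (x 1)‖ ^ 2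
        + (6 * Ly ^ 2 * α ^ 2 * ρ ^ 2 / (1 - c * ρ ^ 2))
            * ∑ t ∈ Finset.Icc 1 T, ‖v t‖ ^ 2
        + (3 * ρ ^ 2 / (1 - c * ρ ^ 2))
            * ∑ t ∈ Finset.Icc 2 T, ⨆ a, ‖ystar (t - 1) a - ystar t a‖ ^ 2 :=
  nonconvex_inner_error_bound_general d1 d2 α ρ Mf Ly c hcdef hcρ T hT ystar hylip v x y g hcontract
    hupdate hbdd
end

section
/- Let M > 0, let w ≥ 1 be an integer, let u_0, u_1, …, u_{w-1} be reals with 1 = u_0 ≥ u_1 ≥ … ≥ u_{w-1} > 0, and set W := Σ_{i=0}^{w-1} u_i. Let T ≥ 1 and let b : ℤ × {1,…,T+1} → ℝ satisfy |b(s, τ)| ≤ M for all s, τ, and b(s, τ) = 0 whenever s ≤ 0. Define G(t, τ) := (1/W)·Σ_{i=0}^{w-1} u_i·b(t − i, τ). Then Σ_{t=1}^T ( G(t, t) − G(t, t+1) ) ≤ M·(2T + 1)/W + M. -/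
open Finset

/-!
Write `S(t, τ) = Σ_{i<w} u_i b(t − i, τ)`. Splitting `S(t,t) − S(t,t+1)` as
`(S(t,t) − S(t+1,t+1)) + (S(t+1,t+1) − S(t,t+1))`, the first parts telescope to
`S(1,1) − S(T+1,T+1) ≤ M + MW` (only the `i = 0` term of `S(1,1)` survives), and each
second part is `Σ u_i (c_i − c_{i+1})` with `c_i = b(t+1−i, t+1)`, which summation by parts
against the nonincreasing weights bounds by `2 u_0 M = 2M`.
-/

/-- `W · G(t, τ)` in the notation of the statement. -/
def windowSum (u : ℕ → ℝ) (w : ℕ) (b : ℤ → ℕ → ℝ) (t τ : ℕ) : ℝ :=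
  ∑ i ∈ range w, u i * b ((t : ℤ) - (i : ℤ)) τ

lemma sum_range_mul_sub_succ_le {u d : ℕ → ℝ} (n : ℕ) (hu : ∀ i < n, u (i + 1) ≤ u i)
    (hd : ∀ i, 0 ≤ d i) :
    ∑ i ∈ range n, u i * (d i - d (i + 1)) ≤ u 0 * d 0 - u n * d n := by
  induction n with
  | zero => simp
  | succ n ih =>
    rw [sum_range_succ]
    have hprev := ih fun i hi => hu i (by omega)
    have hgap := mul_nonneg (sub_nonneg.2 (hu n (by omega))) (hd (n + 1))
    linarith

lemma sum_Icc_sub_le_of_succ_sub_le (g : ℕ → ℕ → ℝ) (δ : ℝ) (T : ℕ)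
    (hstep : ∀ t ∈ Icc 1 T, g (t + 1) (t + 1) - g t (t + 1) ≤ δ) :
    ∑ t ∈ Icc 1 T, (g t t - g t (t + 1)) ≤ g 1 1 - g (T + 1) (T + 1) + T * δ := by
  induction T with
  | zero => simp
  | succ T ih =>
    rw [sum_Icc_succ_top (by omega)]
    have hprev := ih fun t ht => hstep t (Icc_subset_Icc_right (by omega) ht)
    have hlast := hstep (T + 1) (by simp)
    push_cast
    linarith

section windowSum

variable {u : ℕ → ℝ} {w : ℕ} {b : ℤ → ℕ → ℝ} {M : ℝ} {τ : ℕ}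

lemma windowSum_succ_sub_le (hu0 : u 0 = 1) (hmono : ∀ i j, i ≤ j → j < w → u j ≤ u i)
    (hnonneg : ∀ i < w, 0 ≤ u i) (hb : ∀ s, |b s τ| ≤ M) (t : ℕ) :
    windowSum u w b (t + 1) τ - windowSum u w b t τ ≤ 2 * M := by
  -- Extending the weights by `0` at `w` makes the boundary term of summation by parts vanish.
  set v : ℕ → ℝ := fun i => if i < w then u i else 0
  set d : ℕ → ℝ := fun i => b ((t : ℤ) + 1 - i) τ + M
  have hd : ∀ i, 0 ≤ d i := fun i => by linarith [(abs_le.1 (hb ((t : ℤ) + 1 - i))).1]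
  have hv : ∀ i < w, v (i + 1) ≤ v i := fun i hi => by
    simp only [v, if_pos hi]
    split_ifs with h
    · exact hmono i (i + 1) (by omega) h
    · exact hnonneg i hi
  have hv0 : v 0 ≤ 1 := by
    simp only [v]
    split_ifs
    exacts [hu0.le, zero_le_one]
  have hdiff : windowSum u w b (t + 1) τ - windowSum u w b t τ
      = ∑ i ∈ range w, v i * (d i - d (i + 1)) := by
    rw [windowSum, windowSum, ← sum_sub_distrib]
    refine sum_congr rfl fun i hi => ?_
    simp only [v, d, if_pos (mem_range.1 hi)]
    push_cast
    ring_nf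
  calc windowSum u w b (t + 1) τ - windowSum u w b t τ
      = ∑ i ∈ range w, v i * (d i - d (i + 1)) := hdiff
    _ ≤ v 0 * d 0 - v w * d w := sum_range_mul_sub_succ_le w hv hd
    _ = v 0 * d 0 := by simp [v]
    _ ≤ 1 * (2 * M) :=
      mul_le_mul hv0 (by linarith [(abs_le.1 (hb ((t : ℤ) + 1 - (0 : ℕ)))).2]) (hd 0) zero_le_one
    _ = 2 * M := one_mul _

lemma windowSum_one_le (hu0 : u 0 = 1) (hb : ∀ s, |b s τ| ≤ M) (hb0 : ∀ s ≤ 0, b s τ = 0) :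
    windowSum u w b 1 τ ≤ M := by
  cases w with
  | zero => simpa [windowSum] using (abs_nonneg _).trans (hb 0)
  | succ n =>
    rw [windowSum, sum_range_succ', sum_eq_zero fun i _ => by rw [hb0 _ (by omega), mul_zero]]
    simpa [hu0] using (le_abs_self _).trans (hb 1)

lemma abs_windowSum_le (hnonneg : ∀ i < w, 0 ≤ u i) (hb : ∀ s, |b s τ| ≤ M) (t : ℕ) :
    |windowSum u w b t τ| ≤ M * ∑ i ∈ range w, u i :=
  calc |windowSum u w b t τ| ≤ ∑ i ∈ range w, |u i * b ((t : ℤ) - (i : ℤ)) τ| :=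
        abs_sum_le_sum_abs _ _
    _ ≤ ∑ i ∈ range w, u i * M := sum_le_sum fun i hi => by
        rw [abs_mul, abs_of_nonneg (hnonneg i (mem_range.1 hi))]
        exact mul_le_mul_of_nonneg_left (hb _) (hnonneg i (mem_range.1 hi))
    _ = M * ∑ i ∈ range w, u i := by rw [← sum_mul, mul_comm]

end windowSum

theorem sliding_window_telescoping_general
    (M : ℝ) (w : ℕ)
    (u : ℕ → ℝ) (hu0 : u 0 = 1)
    (hmono : ∀ i j, i ≤ j → j < w → u j ≤ u i)
    (hupos : ∀ i, i < w → 0 < u i)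
    (T : ℕ)
    (b : ℤ → ℕ → ℝ)
    (hbM : ∀ s : ℤ, ∀ τ ∈ Finset.Icc 1 (T + 1), |b s τ| ≤ M)
    (hb0 : ∀ s : ℤ, ∀ τ ∈ Finset.Icc 1 (T + 1), s ≤ 0 → b s τ = 0) :
    ∑ t ∈ Finset.Icc 1 T,
        ((1 / ∑ i ∈ Finset.range w, u i) *
            (∑ i ∈ Finset.range w, u i * b ((t : ℤ) - (i : ℤ)) t)
          - (1 / ∑ i ∈ Finset.range w, u i) *
            ∑ i ∈ Finset.range w, u i * b ((t : ℤ) - (i : ℤ)) (t + 1))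
      ≤ M * (2 * (T : ℝ) + 1) / (∑ i ∈ Finset.range w, u i) + M := by
  set W := ∑ i ∈ range w, u i
  have hnonneg : ∀ i < w, 0 ≤ u i := fun i hi => (hupos i hi).le
  have hW : 0 ≤ W := sum_nonneg fun i hi => hnonneg i (mem_range.1 hi)
  have hM : 0 ≤ M := (abs_nonneg _).trans (hbM 0 1 (by simp))
  have hsum : ∑ t ∈ Icc 1 T, (windowSum u w b t t - windowSum u w b t (t + 1))
      ≤ M * (2 * T + 1) + M * W := by
    have htel := sum_Icc_sub_le_of_succ_sub_le (windowSum u w b) (2 * M) T fun t ht =>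
      windowSum_succ_sub_le hu0 hmono hnonneg (fun s => hbM s (t + 1) (by simp_all)) t
    have hfirst := windowSum_one_le (w := w) hu0 (fun s => hbM s 1 (by simp))
      fun s => hb0 s 1 (by simp)
    have hlast := neg_abs_le (windowSum u w b (T + 1) (T + 1))
    have hlast' := abs_windowSum_le hnonneg (fun s => hbM s (T + 1) (by simp)) (T + 1)
    linarith
  calc _ = 1 / W * ∑ t ∈ Icc 1 T, (windowSum u w b t t - windowSum u w b t (t + 1)) := by
        rw [mul_sum]
        simp only [windowSum, mul_sub]
    _ ≤ 1 / W * (M * (2 * T + 1) + M * W) := by gcongr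
    _ = M * (2 * T + 1) / W + M * (W / W) := by ring
    _ ≤ M * (2 * T + 1) / W + M := by
        gcongr
        exact mul_le_of_le_one_right hM (div_self_le_one W)

/-- Sliding-window telescoping lemma for time-averaged objectives: with window size
`w`, nonincreasing weights `1 = u_0 ≥ … ≥ u_{w-1} > 0`, `W = Σ u_i`, and bounded
values `b(s, τ)` vanishing for `s ≤ 0`, the sum of the differences
`G(t,t) − G(t,t+1)` of the window averages `G(t,τ) = (1/W)·Σ_i u_i·b(t−i, τ)` is at
most `M(2T+1)/W + M`. -/
theorem sliding_window_telescoping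
    (M : ℝ) (hM : 0 < M) (w : ℕ) (hw : 1 ≤ w)
    (u : ℕ → ℝ) (hu0 : u 0 = 1)
    (hmono : ∀ i j, i ≤ j → j < w → u j ≤ u i)
    (hupos : ∀ i, i < w → 0 < u i)
    (T : ℕ) (hT : 1 ≤ T)
    (b : ℤ → ℕ → ℝ)
    (hbM : ∀ s : ℤ, ∀ τ ∈ Finset.Icc 1 (T + 1), |b s τ| ≤ M)
    (hb0 : ∀ s : ℤ, ∀ τ ∈ Finset.Icc 1 (T + 1), s ≤ 0 → b s τ = 0) :
    ∑ t ∈ Finset.Icc 1 T,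
        ((1 / ∑ i ∈ Finset.range w, u i) *
            (∑ i ∈ Finset.range w, u i * b ((t : ℤ) - (i : ℤ)) t)
          - (1 / ∑ i ∈ Finset.range w, u i) *
            ∑ i ∈ Finset.range w, u i * b ((t : ℤ) - (i : ℤ)) (t + 1))
      ≤ M * (2 * (T : ℝ) + 1) / (∑ i ∈ Finset.range w, u i) + M :=
  sliding_window_telescoping_general M w u hu0 hmono hupos T b hbM hb0
end
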